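/- arXiv:1605.05783 — 4 statements merged into one kernel-verified Lean document; each statement's English description precedes it below -/
import Mathlib

section
/- Let g be a nonzero polynomial in k[x_0,…,x_n] such that for every variable x_i, some monomial in the support of g has exponent 0 in x_i (equivalently, no variable divides g). Then the Newton dual of the Newton dual of g equals g, i.e., ĝ̂ = g. -/
open MvPolynomial Finset

/-- Newton complementary dual of `g` relative to a given directrix vector `β`. -/
noncomputable def newtonDualWith {k : Type*} [CommSemiring k] {N : ℕ}
    (β : Fin N → ℕ) (g : MvPolynomial (Fin N) k) : MvPolynomial (Fin N) k :=
  ∑ a ∈ g.support,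
    monomial (Finsupp.equivFunOnFinite.symm fun i => β i - a i) (coeff a g)

/-- Newton complementary dual of a single form: directrix vector `β i = degreeOf i g`. -/
noncomputable def newtonDual {k : Type*} [CommSemiring k] {N : ℕ}
    (g : MvPolynomial (Fin N) k) : MvPolynomial (Fin N) k :=
  newtonDualWith (fun i => g.degreeOf i) g

/-- The `i`-th coordinate of the Magnus reciprocal involution: `∏_{j ≠ i} x_j`. -/
noncomputable def magnus (k : Type*) [CommSemiring k] (N : ℕ) (i : Fin N) :
    MvPolynomial (Fin N) k :=
  ∏ j ∈ Finset.univ.erase i, X j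

/-!
Every exponent `a` in the support of `g` satisfies `a ≤ β` for `β i = deg_{x_i} g`, so the
reflection `a ↦ β - a` is an involution on the support: `ĝ = ∑ c_a x^{β - a}` has no
cancellation, and its support is the reflected support. A monomial of `g` with `a i = 0` reflects
to one of `x_i`-degree `β i`, so `ĝ` has the same directrix vector `β`, and dualising again
reflects back to `g`.
-/

noncomputable def newtonReflect {N : ℕ} (β : Fin N → ℕ) (a : Fin N →₀ ℕ) : Fin N →₀ ℕ :=
  Finsupp.equivFunOnFinite.symm fun i => β i - a i

@[simp]
theorem newtonReflect_apply {N : ℕ} (β : Fin N → ℕ) (a : Fin N →₀ ℕ) (i : Fin N) :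
    newtonReflect β a i = β i - a i :=
  rfl

theorem newtonReflect_newtonReflect {N : ℕ} {β : Fin N → ℕ} {a : Fin N →₀ ℕ} (h : ⇑a ≤ β) :
    newtonReflect β (newtonReflect β a) = a := by
  ext i
  simp [Nat.sub_sub_self (h i)]

theorem coeff_newtonDualWith {k : Type*} [CommSemiring k] {N : ℕ} (β : Fin N → ℕ)
    (g : MvPolynomial (Fin N) k) :
    AddMonoidAlgebra.coeff (newtonDualWith β g) =
      Finsupp.mapDomain (newtonReflect β) (AddMonoidAlgebra.coeff g) := by
  classical
  ext m
  rw [newtonDualWith, ← MvPolynomial.coeff, coeff_sum]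
  simp only [coeff_monomial]
  simp [Finsupp.mapDomain, Finsupp.sum, Finsupp.single_apply, MvPolynomial.coeff,
    MvPolynomial.support, newtonReflect]

section bounded

variable {k : Type*} [CommSemiring k] {N : ℕ} {β : Fin N → ℕ} {g : MvPolynomial (Fin N) k}

theorem injOn_newtonReflect_support (hβ : ∀ a ∈ g.support, ⇑a ≤ β) :
    Set.InjOn (newtonReflect β) g.support :=
  Set.LeftInvOn.injOn fun _ ha => newtonReflect_newtonReflect (hβ _ ha)

theorem support_newtonDualWith [DecidableEq (Fin N →₀ ℕ)] (hβ : ∀ a ∈ g.support, ⇑a ≤ β) :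
    (newtonDualWith β g).support = g.support.image (newtonReflect β) := by
  rw [← finsupp_support_eq_support, coeff_newtonDualWith]
  exact Finsupp.mapDomain_support_of_injOn _ (injOn_newtonReflect_support hβ)

theorem newtonDualWith_newtonDualWith (hβ : ∀ a ∈ g.support, ⇑a ≤ β) :
    newtonDualWith β (newtonDualWith β g) = g := by
  rw [← AddMonoidAlgebra.coeff_inj, coeff_newtonDualWith, coeff_newtonDualWith,
    ← Finsupp.mapDomain_comp,
    Finsupp.mapDomain_congr (f := newtonReflect β ∘ newtonReflect β) (g := id)
      fun a ha => newtonReflect_newtonReflect (hβ a ha),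
    Finsupp.mapDomain_id]

theorem degreeOf_newtonDualWith (hβ : ∀ a ∈ g.support, ⇑a ≤ β) {i : Fin N}
    (hi : ∃ a ∈ g.support, a i = 0) :
    (newtonDualWith β g).degreeOf i = β i := by
  classical
  rw [degreeOf_eq_sup, support_newtonDualWith hβ, Finset.sup_image]
  obtain ⟨a, ha, hai⟩ := hi
  refine le_antisymm (Finset.sup_le fun b _ => Nat.sub_le _ _) ?_
  calc β i = newtonReflect β a i := by simp [hai]
    _ ≤ _ := Finset.le_sup (f := fun b => newtonReflect β b i) ha

end bounded

theorem newtonDual_newtonDual_general {k : Type*} [Field k] {n : ℕ}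
    (g : MvPolynomial (Fin (n + 1)) k)
    (h : ∀ i, ∃ a ∈ g.support, a i = 0) :
    newtonDual (newtonDual g) = g := by
  have hβ : ∀ a ∈ g.support, ⇑a ≤ fun i => g.degreeOf i :=
    fun _ ha i => monomial_le_degreeOf i ha
  have hdeg : (fun i => (newtonDual g).degreeOf i) = fun i => g.degreeOf i :=
    funext fun i => degreeOf_newtonDualWith hβ (h i)
  rw [newtonDual, hdeg]
  exact newtonDualWith_newtonDualWith hβ

theorem newtonDual_newtonDual {k : Type*} [Field k] {n : ℕ}
    (g : MvPolynomial (Fin (n + 1)) k) (hg : g ≠ 0)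
    (h : ∀ i, ∃ a ∈ g.support, a i = 0) :
    newtonDual (newtonDual g) = g :=
  newtonDual_newtonDual_general g h
end

section
/- Let g be a nonzero homogeneous polynomial of degree d ≥ 1 in R = k[x_0,…,x_n] with n ≥ 1, with directrix vector β (β_i = deg_{x_i}(g)) and Newton dual ĝ. Let x̂ = (x̂_0,…,x̂_n) with x̂_i = ∏_{j≠i} x_j. Then g(x̂_0,…,x̂_n) = x_0^{d−β_0} ⋯ x_n^{d−β_n} · ĝ. -/
open MvPolynomial Finset

/-!
Substituting `x̂` into a monomial `x^a` of degree `d` gives `x^(d - a)`, so for a form of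
degree `d` the substitution is the Newton dual with respect to the constant directrix `d`.
Multiplying a Newton dual by `x^(γ - β)` raises its directrix from `β` to `γ`, and the
directrix vector of a form of degree `d` is bounded by `d`.
-/

section

variable {k : Type*} [CommSemiring k] {N : ℕ}

theorem prod_X_pow_eq_monomial_equivFunOnFinite (e : Fin N → ℕ) :
    ∏ i, (X i : MvPolynomial (Fin N) k) ^ e i =
      monomial (Finsupp.equivFunOnFinite.symm e) 1 := by
  rw [monomial_eq, C_1, one_mul, Finsupp.prod_fintype _ _ fun _ => pow_zero _]
  rfl

theorem prod_magnus_pow (a : Fin N → ℕ) :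
    ∏ i, magnus k N i ^ a i = ∏ j, X j ^ (∑ i, a i - a j) := by
  simp only [magnus, ← prod_pow]
  rw [prod_comm' (t' := univ) (s' := fun j => univ.erase j)
    fun i j => by simp [and_comm, ne_comm]]
  refine prod_congr rfl fun j _ => ?_
  rw [prod_pow_eq_pow_sum, ← sum_erase_add univ a (mem_univ j), Nat.add_sub_cancel]

theorem aeval_magnus_monomial (a : Fin N →₀ ℕ) (c : k) :
    aeval (magnus k N) (monomial a c) =
      monomial (Finsupp.equivFunOnFinite.symm fun j => a.degree - a j) c := by
  rw [aeval_monomial, Finsupp.prod_fintype _ _ fun _ => pow_zero _, prod_magnus_pow,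
    ← Finsupp.degree_eq_sum, prod_X_pow_eq_monomial_equivFunOnFinite, algebraMap_eq,
    C_mul_monomial, mul_one]

theorem aeval_magnus_eq_newtonDualWith {d : ℕ} {g : MvPolynomial (Fin N) k}
    (hg : g.IsHomogeneous d) :
    aeval (magnus k N) g = newtonDualWith (fun _ => d) g := by
  conv_lhs => rw [g.as_sum]
  rw [map_sum, newtonDualWith]
  refine sum_congr rfl fun a ha => ?_
  have hdeg : a.degree = d := by
    rw [Finsupp.degree_eq_weight_one]
    exact hg (mem_support_iff.mp ha)
  rw [aeval_magnus_monomial, hdeg]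

theorem prod_X_pow_sub_mul_newtonDualWith {β γ : Fin N → ℕ} {g : MvPolynomial (Fin N) k}
    (hβγ : ∀ i, β i ≤ γ i) (hgβ : ∀ a ∈ g.support, ∀ i, a i ≤ β i) :
    (∏ i, X i ^ (γ i - β i)) * newtonDualWith β g = newtonDualWith γ g := by
  rw [newtonDualWith, newtonDualWith, mul_sum, prod_X_pow_eq_monomial_equivFunOnFinite]
  refine sum_congr rfl fun a ha => ?_
  have hexp : (Finsupp.equivFunOnFinite.symm fun i => γ i - β i) +
      Finsupp.equivFunOnFinite.symm (fun i => β i - a i) =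
      Finsupp.equivFunOnFinite.symm fun i => γ i - a i := by
    ext i
    simp only [Finsupp.add_apply, Finsupp.equivFunOnFinite_symm_apply_apply]
    have := hgβ a ha i
    have := hβγ i
    omega
  rw [monomial_mul, one_mul, hexp]

end

theorem eval_magnus_eq_monomial_mul_newtonDual_general {k : Type*} [Field k] {n d : ℕ}
    (g : MvPolynomial (Fin (n + 1)) k)
    (hhom : g.IsHomogeneous d) :
    aeval (magnus k (n + 1)) g =
      (∏ i, X i ^ (d - g.degreeOf i)) * newtonDual g := by
  rw [newtonDual, prod_X_pow_sub_mul_newtonDualWith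
      (fun i => (degreeOf_le_totalDegree g i).trans hhom.totalDegree_le)
      fun a ha i => monomial_le_degreeOf i ha,
    aeval_magnus_eq_newtonDualWith hhom]

theorem eval_magnus_eq_monomial_mul_newtonDual {k : Type*} [Field k] {n d : ℕ}
    (hn : 1 ≤ n) (hd : 1 ≤ d) (g : MvPolynomial (Fin (n + 1)) k)
    (hg : g ≠ 0) (hhom : g.IsHomogeneous d) :
    aeval (magnus k (n + 1)) g =
      (∏ i, X i ^ (d - g.degreeOf i)) * newtonDual g :=
  eval_magnus_eq_monomial_mul_newtonDual_general g hhom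
end

section
/- Let n ≥ 1. The products x̂_0 = x_1⋯x_n, x̂_1 = x_0 x_2⋯x_n, …, x̂_n = x_0⋯x_{n−1} are algebraically independent over k in k[x_0,…,x_n]. -/
open MvPolynomial Finset

/-!
Each `x̂_i` is a monomial, so substituting the `x̂_i` sends the monomial `y^a` to the monomial
`x^(L a)`, where `L` is the ℕ-linear map `a ↦ (|a| - a_j)_j` and `|a| = ∑ a_j`. Summing the
coordinates of `L a` gives `(N - 1) |a|`, so for `N ≥ 2` the map `L` is injective: distinct
monomials go to distinct monomials, and no nonzero polynomial can vanish at the `x̂_i`.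
-/

theorem aeval_monomial_one_eq_mapDomainAlgHom {ι σ R : Type*} [CommSemiring R]
    (e : ι → σ →₀ ℕ) :
    aeval (fun i => monomial (e i) (1 : R)) =
      AddMonoidAlgebra.mapDomainAlgHom R R (Finsupp.linearCombination ℕ e).toAddMonoidHom := by
  ext i : 1
  rw [aeval_X]
  simp [X, monomial]

theorem algebraicIndependent_monomial_one {ι σ R : Type*} [CommRing R] {e : ι → σ →₀ ℕ}
    (he : Function.Injective (Finsupp.linearCombination ℕ e)) :
    AlgebraicIndependent R (fun i => monomial (e i) (1 : R)) := by
  rw [algebraicIndependent_iff_injective_aeval, aeval_monomial_one_eq_mapDomainAlgHom]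
  exact AddMonoidAlgebra.mapDomain_injective he

noncomputable def magnusExponent (N : ℕ) (i : Fin N) : Fin N →₀ ℕ :=
  ∑ j ∈ univ.erase i, Finsupp.single j 1

theorem magnus_eq_monomial (k : Type*) [CommSemiring k] (N : ℕ) (i : Fin N) :
    magnus k N i = monomial (magnusExponent N i) 1 := by
  rw [magnus, magnusExponent, monomial_sum_one]
  rfl

theorem linearCombination_magnusExponent_apply_add {N : ℕ} (a : Fin N →₀ ℕ) (j : Fin N) :
    Finsupp.linearCombination ℕ (magnusExponent N) a j + a j = ∑ i, a i := by
  simp only [Finsupp.linearCombination_apply, magnusExponent, zero_nsmul, implies_true,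
    Finsupp.sum_fintype, Finsupp.finsetSum_apply, Finsupp.coe_smul, Finsupp.coe_finsetSum,
    Pi.smul_apply, Finset.sum_apply, Finsupp.single_apply, sum_ite_eq', mem_erase, ne_eq, mem_univ,
    and_true, ite_not, smul_eq_mul, mul_ite, mul_zero, mul_one]
  rw [← sum_erase_add _ _ (mem_univ j), sum_ite_of_false (by simp [eq_comm]), if_pos rfl,
    add_zero, sum_erase_add _ _ (mem_univ j)]

theorem linearCombination_magnusExponent_injective {N : ℕ} (hN : 2 ≤ N) :
    Function.Injective (Finsupp.linearCombination ℕ (magnusExponent N)) := by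
  intro a b hab
  have total (c : Fin N →₀ ℕ) :
      ∑ j, Finsupp.linearCombination ℕ (magnusExponent N) c j + ∑ j, c j = N * ∑ j, c j := by
    simp [← sum_add_distrib, linearCombination_magnusExponent_apply_add]
  have hsum : ∑ j, a j = ∑ j, b j := by
    obtain ⟨M, rfl⟩ : ∃ M, N = M + 2 := ⟨N - 2, by omega⟩
    have ha := total a
    have hb := total b
    rw [hab] at ha
    refine Nat.eq_of_mul_eq_mul_left M.succ_pos ?_
    linarith
  ext j
  have ha := linearCombination_magnusExponent_apply_add a j
  have hb := linearCombination_magnusExponent_apply_add b j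
  rw [hab] at ha
  omega

theorem magnus_algebraicIndependent {k : Type*} [Field k] {n : ℕ} (hn : 1 ≤ n) :
    AlgebraicIndependent k (magnus k (n + 1)) := by
  rw [show magnus k (n + 1) = _ from funext (magnus_eq_monomial k (n + 1))]
  exact algebraicIndependent_monomial_one (linearCombination_magnusExponent_injective (by omega))
end

section
/- Let g = {g_0,…,g_m} be forms of degree d in k[x_0,…,x_n] satisfying the canonical restrictions, with Newton dual set ĝ. Then ĝ also satisfies the canonical restrictions: gcd(ĝ_0,…,ĝ_m) = 1 and every variable x_i occurs in some monomial of some ĝ_j. Moreover the directrix vector of ĝ equals the directrix vector β of g, and the dual of ĝ is g. -/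
open MvPolynomial Finset

/-!
Every exponent `a` of a `g j` satisfies `a ≤ β`, so the reflection `a ↦ β - a` is an
involution on the supports, which makes the dual of `ĝ` equal to `g`; it is also multiplicative
on boxes: `(p * q)^∨_{γ + η} = p^∨_γ * q^∨_η` when the exponents of `p` and `q` are bounded by
`γ` and `η`.

A trivial gcd means that no `x_i` divides every `g j`: some monomial of some `g j` is free of
`x_i`, and it reflects to a monomial of `x_i`-degree `β i`, which fixes the directrix vector of
`ĝ`. Dually, a monomial of `g` realising `β i` reflects to a monomial of `ĝ` free of `x_i`.

If `p` divides every `ĝ_j = p * q_j`, multiplicativity shows that the dual of `p` with respect to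
its own degree vector divides every `g j`. Hence it is a unit, `p` is a monomial, and since no
`x_i` divides all the `ĝ_j`, that monomial is a constant.
-/

namespace MvPolynomial

theorem X_dvd_iff_forall_mem_support {R σ : Type*} [CommSemiring R] {i : σ}
    {p : MvPolynomial σ R} : X i ∣ p ↔ ∀ a ∈ p.support, a i ≠ 0 := by
  classical
  constructor
  · rintro ⟨w, rfl⟩ a ha hai
    rw [mem_support_iff, coeff_X_mul', if_neg (by simpa using hai)] at ha
    exact ha rfl
  · intro h
    rw [p.as_sum]
    exact Finset.dvd_sum fun a ha => X_dvd_monomial.mpr (Or.inr (h a ha))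

theorem exists_mem_support_apply_eq_degreeOf {R σ : Type*} [CommSemiring R]
    {p : MvPolynomial σ R} (hp : p ≠ 0) (i : σ) : ∃ a ∈ p.support, a i = p.degreeOf i := by
  rw [degreeOf_eq_sup]
  exact (Finset.exists_mem_eq_sup _ (support_nonempty.mpr hp) (fun a => a i)).imp
    fun _ ha => ⟨ha.1, ha.2.symm⟩

theorem exists_mem_support_apply_eq_zero_of_forall_dvd_isUnit {R σ ι : Type*} [CommRing R]
    [IsDomain R] {g : ι → MvPolynomial σ R} (hgcd : ∀ p, (∀ j, p ∣ g j) → IsUnit p) (i : σ) :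
    ∃ j, ∃ a ∈ (g j).support, a i = 0 := by
  by_contra! h
  exact (X_prime (i := i)).not_isUnit
    (hgcd _ fun j => X_dvd_iff_forall_mem_support.mpr (h j))

end MvPolynomial

section NewtonDual

variable {k : Type*} {N : ℕ}

section CommSemiring

variable [CommSemiring k] {β : Fin N → ℕ} {h : MvPolynomial (Fin N) k}

theorem newtonDualWith_eq_sum (β : Fin N → ℕ) (h : MvPolynomial (Fin N) k) :
    newtonDualWith β h =
      ∑ a ∈ h.support, monomial (Finsupp.equivFunOnFinite.symm β - a) (coeff a h) := by
  refine Finset.sum_congr rfl fun a _ => ?_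
  congr 2
  ext i
  simp

@[simp]
theorem newtonDualWith_zero (β : Fin N → ℕ) :
    newtonDualWith β (0 : MvPolynomial (Fin N) k) = 0 := by
  simp [newtonDualWith]

theorem newtonDualWith_add (β : Fin N → ℕ) (p q : MvPolynomial (Fin N) k) :
    newtonDualWith β (p + q) = newtonDualWith β p + newtonDualWith β q := by
  have hsum : ∀ p : MvPolynomial (Fin N) k, newtonDualWith β p =
      (AddMonoidAlgebra.coeff p).sum fun a c =>
        monomial (Finsupp.equivFunOnFinite.symm β - a) c :=
    fun p => by rw [sum_def, newtonDualWith_eq_sum]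
  rw [hsum, hsum, hsum, AddMonoidAlgebra.coeff_add, Finsupp.sum_add_index']
  · exact fun _ => map_zero _
  · exact fun _ _ _ => map_add _ _ _

theorem newtonDualWith_sum {ι : Type*} (β : Fin N → ℕ) (s : Finset ι)
    (f : ι → MvPolynomial (Fin N) k) :
    newtonDualWith β (∑ j ∈ s, f j) = ∑ j ∈ s, newtonDualWith β (f j) := by
  induction s using Finset.cons_induction with
  | empty => simp
  | cons j s hj ih => rw [Finset.sum_cons, Finset.sum_cons, newtonDualWith_add, ih]

theorem newtonDualWith_monomial (β : Fin N → ℕ) (a : Fin N →₀ ℕ) (c : k) :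
    newtonDualWith β (monomial a c) = monomial (Finsupp.equivFunOnFinite.symm β - a) c := by
  classical
  rcases eq_or_ne c 0 with rfl | hc
  · simp
  · rw [newtonDualWith_eq_sum, support_monomial, if_neg hc, Finset.sum_singleton,
      coeff_monomial, if_pos rfl]

theorem le_equivFunOnFinite_symm_of_mem_support (hh : ∀ i, h.degreeOf i ≤ β i)
    {a : Fin N →₀ ℕ} (ha : a ∈ h.support) : a ≤ Finsupp.equivFunOnFinite.symm β :=
  fun i => (monomial_le_degreeOf i ha).trans (hh i)

theorem degreeOf_newtonDualWith_le (β : Fin N → ℕ) (h : MvPolynomial (Fin N) k) (i : Fin N) :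
    (newtonDualWith β h).degreeOf i ≤ β i := by
  classical
  refine degreeOf_le_iff.mpr fun b hb => ?_
  rw [newtonDualWith_eq_sum] at hb
  obtain ⟨a, -, hb⟩ := Finset.mem_biUnion.mp (support_sum hb)
  rw [Finset.mem_singleton.mp (support_monomial_subset hb)]
  simp

theorem coeff_newtonDualWith_s13 (hh : ∀ i, h.degreeOf i ≤ β i) {b : Fin N →₀ ℕ}
    (hb : b ≤ Finsupp.equivFunOnFinite.symm β) :
    coeff (Finsupp.equivFunOnFinite.symm β - b) (newtonDualWith β h) = coeff b h := by
  classical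
  rw [newtonDualWith_eq_sum, coeff_sum]
  simp_rw [coeff_monomial]
  rw [Finset.sum_congr rfl fun a ha =>
    if_congr (tsub_right_inj (le_equivFunOnFinite_symm_of_mem_support hh ha) hb) rfl rfl,
    Finset.sum_ite_eq']
  split_ifs with hbh
  · rfl
  · exact (notMem_support_iff.mp hbh).symm

theorem newtonDualWith_newtonDualWith_s13 (hh : ∀ i, h.degreeOf i ≤ β i) :
    newtonDualWith β (newtonDualWith β h) = h := by
  ext b
  by_cases hb : b ≤ Finsupp.equivFunOnFinite.symm β
  · conv_lhs => rw [← tsub_tsub_cancel_of_le hb]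
    rw [coeff_newtonDualWith_s13 (degreeOf_newtonDualWith_le β h) tsub_le_self,
      coeff_newtonDualWith_s13 hh hb]
  · rw [notMem_support_iff.mp (mt (le_equivFunOnFinite_symm_of_mem_support hh) hb),
      ← notMem_support_iff]
    exact mt (le_equivFunOnFinite_symm_of_mem_support (degreeOf_newtonDualWith_le β _)) hb

theorem mem_support_newtonDualWith (hh : ∀ i, h.degreeOf i ≤ β i)
    {a : Fin N →₀ ℕ} (ha : a ∈ h.support) :
    Finsupp.equivFunOnFinite.symm β - a ∈ (newtonDualWith β h).support := by
  rw [mem_support_iff, coeff_newtonDualWith_s13 hh (le_equivFunOnFinite_symm_of_mem_support hh ha)]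
  exact mem_support_iff.mp ha

theorem not_X_dvd_newtonDualWith (hh : ∀ i, h.degreeOf i ≤ β i) {a : Fin N →₀ ℕ}
    (ha : a ∈ h.support) {i : Fin N} (hai : a i = β i) :
    ¬ X i ∣ newtonDualWith β h := by
  rw [X_dvd_iff_forall_mem_support]
  intro hX
  exact hX _ (mem_support_newtonDualWith hh ha) (by simp [hai])

theorem newtonDualWith_mul {γ η : Fin N → ℕ} {p q : MvPolynomial (Fin N) k}
    (hp : ∀ i, p.degreeOf i ≤ γ i) (hq : ∀ i, q.degreeOf i ≤ η i) :
    newtonDualWith (γ + η) (p * q) = newtonDualWith γ p * newtonDualWith η q := by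
  have hpq : p * q = ∑ a ∈ p.support, ∑ b ∈ q.support,
      monomial (a + b) (coeff a p * coeff b q) := by
    conv_lhs => rw [p.as_sum, q.as_sum]
    simp_rw [Finset.sum_mul_sum, monomial_mul]
  rw [hpq, newtonDualWith_eq_sum γ p, newtonDualWith_eq_sum η q, Finset.sum_mul_sum]
  simp only [newtonDualWith_sum, newtonDualWith_monomial, monomial_mul]
  refine Finset.sum_congr rfl fun a ha => Finset.sum_congr rfl fun b hb => ?_
  congr 2
  ext i
  have hai := Finsupp.le_def.mp (le_equivFunOnFinite_symm_of_mem_support hp ha) i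
  have hbi := Finsupp.le_def.mp (le_equivFunOnFinite_symm_of_mem_support hq hb) i
  simp only [Finsupp.coe_tsub, Finsupp.coe_add, Finsupp.coe_equivFunOnFinite_symm,
    Pi.sub_apply, Pi.add_apply] at hai hbi ⊢
  omega

end CommSemiring

theorem newtonDual_dvd_of_dvd_newtonDualWith [CommSemiring k] [NoZeroDivisors k]
    {β : Fin N → ℕ} {h p : MvPolynomial (Fin N) k} (hh : ∀ i, h.degreeOf i ≤ β i)
    (hp : p ∣ newtonDualWith β h) : newtonDual p ∣ h := by
  obtain ⟨q, hq⟩ := hp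
  rcases eq_or_ne h 0 with rfl | h0
  · exact dvd_zero _
  have hpq : p * q ≠ 0 := by
    rw [← hq]
    intro h'
    rw [← newtonDualWith_newtonDualWith_s13 hh, h', newtonDualWith_zero] at h0
    exact h0 rfl
  have hdeg : ∀ i, p.degreeOf i + q.degreeOf i ≤ β i := fun i => by
    rw [← degreeOf_mul_eq (left_ne_zero_of_mul hpq) (right_ne_zero_of_mul hpq), ← hq]
    exact degreeOf_newtonDualWith_le β h i
  have hpβ : (fun i => p.degreeOf i) ≤ β := fun i => (Nat.le_add_right _ _).trans (hdeg i)
  refine ⟨newtonDualWith (β - fun i => p.degreeOf i) q, ?_⟩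
  calc h = newtonDualWith β (p * q) := by rw [← hq, newtonDualWith_newtonDualWith_s13 hh]
    _ = newtonDualWith ((fun i => p.degreeOf i) + (β - fun i => p.degreeOf i)) (p * q) := by
        rw [add_tsub_cancel_of_le hpβ]
    _ = _ := newtonDualWith_mul (fun i => le_rfl) (fun i => le_tsub_of_add_le_left (hdeg i))

theorem exists_eq_monomial_of_isUnit_newtonDual [CommRing k] [IsReduced k]
    {p : MvPolynomial (Fin N) k} (hu : IsUnit (newtonDual p)) :
    ∃ c, IsUnit c ∧ p = monomial (Finsupp.equivFunOnFinite.symm fun i => p.degreeOf i) c := by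
  obtain ⟨c, hc, hpc⟩ := isUnit_iff_eq_C_of_isReduced.mp hu
  refine ⟨c, hc, ?_⟩
  calc p = newtonDualWith (fun i => p.degreeOf i) (newtonDual p) :=
        (newtonDualWith_newtonDualWith_s13 fun i => le_rfl).symm
    _ = _ := by rw [hpc, ← monomial_zero', newtonDualWith_monomial, tsub_zero]

theorem isUnit_of_forall_dvd_newtonDualWith [CommRing k] [IsDomain k] {ι : Type*}
    {β : Fin N → ℕ} {g : ι → MvPolynomial (Fin N) k} {p : MvPolynomial (Fin N) k}
    (hgcd : ∀ p, (∀ j, p ∣ g j) → IsUnit p) (hgβ : ∀ j i, (g j).degreeOf i ≤ β i)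
    (hX : ∀ i, ∃ j, ¬ X i ∣ newtonDualWith β (g j)) (hp : ∀ j, p ∣ newtonDualWith β (g j)) :
    IsUnit p := by
  obtain ⟨c, hc, hpc⟩ := exists_eq_monomial_of_isUnit_newtonDual
    (hgcd _ fun j => newtonDual_dvd_of_dvd_newtonDualWith (hgβ j) (hp j))
  have hγ : (Finsupp.equivFunOnFinite.symm fun i => p.degreeOf i) = 0 := by
    ext i
    by_contra hi
    obtain ⟨j, hj⟩ := hX i
    refine hj (dvd_trans ?_ (hp j))
    rw [hpc]
    exact X_dvd_monomial.mpr (Or.inr hi)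
  rw [hpc, hγ, monomial_zero']
  exact hc.map C

end NewtonDual

theorem newtonDualSet_canonical_restrictions_general {k : Type*} [Field k] {n m : ℕ}
    (g : Fin (m + 1) → MvPolynomial (Fin (n + 1)) k)
    (hne : ∀ j, g j ≠ 0)
    -- canonical restrictions on g: trivial gcd and every variable occurs
    (hgcd : ∀ p : MvPolynomial (Fin (n + 1)) k, (∀ j, p ∣ g j) → IsUnit p)
    (hvar : ∀ i, ∃ j, (g j).degreeOf i ≠ 0)
    (β : Fin (n + 1) → ℕ)
    (hβ : ∀ i, β i = Finset.univ.sup fun j => (g j).degreeOf i) :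
    -- the dual set satisfies the canonical restrictions
    (∀ p : MvPolynomial (Fin (n + 1)) k,
        (∀ j, p ∣ newtonDualWith β (g j)) → IsUnit p) ∧
    (∀ i, ∃ j, (newtonDualWith β (g j)).degreeOf i ≠ 0) ∧
    -- the directrix vector of the dual set equals β
    (∀ i, (Finset.univ.sup fun j => (newtonDualWith β (g j)).degreeOf i) = β i) ∧
    -- the dual of the dual set is the original set
    (∀ j, newtonDualWith β (newtonDualWith β (g j)) = g j) := by
  have hgβ : ∀ j i, (g j).degreeOf i ≤ β i := fun j i =>
    hβ i ▸ Finset.le_sup (f := fun j => (g j).degreeOf i) (Finset.mem_univ j)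
  have hdirectrix :
      ∀ i, (Finset.univ.sup fun j => (newtonDualWith β (g j)).degreeOf i) = β i := by
    intro i
    obtain ⟨j, a, ha, hai⟩ := exists_mem_support_apply_eq_zero_of_forall_dvd_isUnit hgcd i
    refine le_antisymm (Finset.sup_le fun j _ => degreeOf_newtonDualWith_le β (g j) i) ?_
    calc β i = (Finsupp.equivFunOnFinite.symm β - a) i := by simp [hai]
      _ ≤ (newtonDualWith β (g j)).degreeOf i :=
        monomial_le_degreeOf i (mem_support_newtonDualWith (hgβ j) ha)
      _ ≤ _ :=
        Finset.le_sup (f := fun j => (newtonDualWith β (g j)).degreeOf i) (Finset.mem_univ j)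
  have hX : ∀ i, ∃ j, ¬ X i ∣ newtonDualWith β (g j) := by
    intro i
    obtain ⟨j, -, hj⟩ := Finset.exists_mem_eq_sup Finset.univ Finset.univ_nonempty
      fun j => (g j).degreeOf i
    obtain ⟨a, ha, hai⟩ := exists_mem_support_apply_eq_degreeOf (hne j) i
    exact ⟨j, not_X_dvd_newtonDualWith (hgβ j) ha (by rw [hai, hβ, hj])⟩
  refine ⟨fun p => isUnit_of_forall_dvd_newtonDualWith hgcd hgβ hX, fun i => ?_, hdirectrix,
    fun j => newtonDualWith_newtonDualWith_s13 (hgβ j)⟩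
  obtain ⟨j₀, hj₀⟩ := hvar i
  have hβi : β i ≠ 0 := fun h0 => hj₀ (Nat.le_zero.mp (h0 ▸ hgβ j₀ i))
  by_contra! h
  exact hβi ((hdirectrix i).symm.trans ((Finset.sup_eq_bot_iff _ _).mpr fun j _ => h j))

theorem newtonDualSet_canonical_restrictions {k : Type*} [Field k] {n m d : ℕ}
    (hn : 1 ≤ n) (hd : 1 ≤ d)
    (g : Fin (m + 1) → MvPolynomial (Fin (n + 1)) k)
    (hne : ∀ j, g j ≠ 0) (hhom : ∀ j, (g j).IsHomogeneous d)
    -- canonical restrictions on g: trivial gcd and every variable occurs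
    (hgcd : ∀ p : MvPolynomial (Fin (n + 1)) k, (∀ j, p ∣ g j) → IsUnit p)
    (hvar : ∀ i, ∃ j, (g j).degreeOf i ≠ 0)
    (β : Fin (n + 1) → ℕ)
    (hβ : ∀ i, β i = Finset.univ.sup fun j => (g j).degreeOf i) :
    -- the dual set satisfies the canonical restrictions
    (∀ p : MvPolynomial (Fin (n + 1)) k,
        (∀ j, p ∣ newtonDualWith β (g j)) → IsUnit p) ∧
    (∀ i, ∃ j, (newtonDualWith β (g j)).degreeOf i ≠ 0) ∧
    -- the directrix vector of the dual set equals β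
    (∀ i, (Finset.univ.sup fun j => (newtonDualWith β (g j)).degreeOf i) = β i) ∧
    -- the dual of the dual set is the original set
    (∀ j, newtonDualWith β (newtonDualWith β (g j)) = g j) :=
  newtonDualSet_canonical_restrictions_general g hne hgcd hvar β hβ
end
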